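/- arXiv:2301.05610 — 2 statements merged into one kernel-verified Lean document; each statement's English description precedes it below -/
import Mathlib

section
/- Let M ∈ ℂ^{n×n} be invertible, B ∈ ℂ^{n×n_I}, C ∈ ℂ^{n_O×n}, and let V ∈ ℂ^{n×r} be such that M̂ := VᵀMV is invertible. Let V_r ∈ ℂ^{n×ρ} be such that M_r := VᵣᵀMVᵣ is invertible, and for each column index j let x̂_{r_j} := Vᵣ (VᵣᵀMVᵣ)^{-1} Vᵣᵀ r_j be the Galerkin approximation of the solution of the residual system M x_{r_j} = r_j. Define the error estimator Δ̃ := max_{i,j} |C_i x̂_{r_j}| and δ := max_{i,j} |C_i (x_{r_j} − x̂_{r_j})|, where C_i is the i-th row of C. Then the maximum-entry output error of the reduced-order model satisfies the two-sided bound Δ̃ − δ ≤ ‖y − ŷ‖_max ≤ Δ̃ + δ. -/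
/-!
The output error of the reduced model is the output of the residual system,
`C M⁻¹ B − C V M̂⁻¹ VᵀB = C M⁻¹ (B − M V M̂⁻¹ VᵀB) = C M⁻¹ R`, whose `(i, j)` entry is
`C_i x_{r_j}`. Read as sup norms of functions of `(i, j)`, the three quantities are
`‖y − ŷ‖_max = ‖C x_r‖`, `Δ̃ = ‖C x̂_r‖` and `δ = ‖C x_r − C x̂_r‖`, so the two-sided bound is
the reverse triangle inequality for the sup norm.
-/

open Matrix

theorem Matrix.mul_nonsing_inv_mul_sub_mul {m n p α : Type*} [Fintype n] [DecidableEq n]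
    [CommRing α] (C : Matrix m n α) (M : Matrix n n α) (B X : Matrix n p α) (hM : IsUnit M.det) :
    C * M⁻¹ * (B - M * X) = C * M⁻¹ * B - C * X := by
  rw [Matrix.mul_sub, Matrix.mul_assoc C M⁻¹ (M * X), Matrix.nonsing_inv_mul_cancel_left M X hM]

theorem Finset.univ_sup'_norm_eq_norm {ι E : Type*} [Fintype ι] [SeminormedAddGroup E]
    (h : (Finset.univ : Finset ι).Nonempty) (f : ι → E) :
    Finset.univ.sup' h (fun i => ‖f i‖) = ‖f‖ := by
  refine le_antisymm (Finset.sup'_le _ _ fun i _ => norm_le_pi_norm f i) ?_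
  have : Nonempty ι := Finset.univ_nonempty_iff.1 h
  exact (pi_norm_le_iff_of_nonempty f).2 fun i =>
    Finset.le_sup' (fun i => ‖f i‖) (Finset.mem_univ i)

theorem estimator_two_sided_bound_general
    {n nI nO r : ℕ} [NeZero nI] [NeZero nO]
    (M : Matrix (Fin n) (Fin n) ℂ) (B : Matrix (Fin n) (Fin nI) ℂ)
    (C : Matrix (Fin nO) (Fin n) ℂ)
    (V : Matrix (Fin n) (Fin r) ℂ)
    (hM : IsUnit M.det)
    -- residual matrix `R := B − M x̂`
    (R : Matrix (Fin n) (Fin nI) ℂ)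
    (hR : R = B - M * (V * (Vᵀ * M * V)⁻¹ * (Vᵀ * B)))
    -- exact residual-system solutions and their Galerkin approximations
    (xr xrhat : Fin nI → Fin n → ℂ)
    (hxr : ∀ j, xr j = M⁻¹.mulVec fun k => R k j)
    -- the estimator `Δ̃`, the deviation `δ`, and the true max-entry error
    (Δ δ errMax : ℝ)
    (hΔ : Δ = (Finset.univ : Finset (Fin nO × Fin nI)).sup' Finset.univ_nonempty
        fun p => ‖(C.mulVec (xrhat p.2) p.1)‖)
    (hδ : δ = (Finset.univ : Finset (Fin nO × Fin nI)).sup' Finset.univ_nonempty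
        fun p => ‖(C.mulVec (xr p.2 - xrhat p.2) p.1)‖)
    (herr : errMax = (Finset.univ : Finset (Fin nO × Fin nI)).sup' Finset.univ_nonempty
        fun p =>
          ‖
            (((C * M⁻¹ * B) - (C * V * (Vᵀ * M * V)⁻¹ * (Vᵀ * B))) p.1 p.2)‖) :
    Δ - δ ≤ errMax ∧ errMax ≤ Δ + δ := by
  have herr_eq_residual_output :
      C * M⁻¹ * B - C * V * (Vᵀ * M * V)⁻¹ * (Vᵀ * B) = C * M⁻¹ * R := by
    rw [hR, Matrix.mul_nonsing_inv_mul_sub_mul _ _ _ _ hM]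
    simp only [Matrix.mul_assoc]
  set y : Fin nO × Fin nI → ℂ := fun p => (C *ᵥ xr p.2) p.1
  set yhat : Fin nO × Fin nI → ℂ := fun p => (C *ᵥ xrhat p.2) p.1
  have herr_norm : errMax = ‖y‖ := by
    rw [herr, herr_eq_residual_output, ← Finset.univ_sup'_norm_eq_norm Finset.univ_nonempty]
    simp only [y, hxr, mulVec_mulVec]
    rfl
  have hΔ_norm : Δ = ‖yhat‖ := by rw [hΔ, Finset.univ_sup'_norm_eq_norm]
  have hδ_norm : δ = ‖y - yhat‖ := by
    rw [hδ, ← Finset.univ_sup'_norm_eq_norm Finset.univ_nonempty]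
    simp only [y, yhat, mulVec_sub, Pi.sub_apply]
  obtain ⟨hupper, hlower⟩ := abs_sub_le_iff.1 (abs_norm_sub_norm_le y yhat)
  rw [herr_norm, hΔ_norm, hδ_norm]
  constructor <;> linarith

/-- **Two-sided bound for the error estimator `Δ̃` (Lemma 1 / Theorem 4.2 of [FengB21]).**
Let `M : ℂ^{n×n}` be invertible, `B : ℂ^{n×n_I}`, `C : ℂ^{n_O×n}`, and `V : ℂ^{n×r}` with
`M̂ := VᵀMV` invertible.  FOM output: `y := C M⁻¹ B`; ROM output: `ŷ := C V M̂⁻¹ VᵀB`;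
residual `R := B − M V M̂⁻¹ VᵀB` with columns `r_j`; exact residual-system solutions
`x_{r_j} := M⁻¹ r_j`.  Let `V_r : ℂ^{n×ρ}` with `M_r := VᵣᵀMVᵣ` invertible and Galerkin
approximations `x̂_{r_j} := Vᵣ Mᵣ⁻¹ Vᵣᵀ r_j`.  With `Δ̃ := max_{i,j} |C_i x̂_{r_j}|` and
`δ := max_{i,j} |C_i (x_{r_j} − x̂_{r_j})|`, the maximum-entry output error satisfies
`Δ̃ − δ ≤ ‖y − ŷ‖_max ≤ Δ̃ + δ`. -/
theorem estimator_two_sided_bound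
    {n nI nO r ρ : ℕ} [NeZero nI] [NeZero nO]
    (M : Matrix (Fin n) (Fin n) ℂ) (B : Matrix (Fin n) (Fin nI) ℂ)
    (C : Matrix (Fin nO) (Fin n) ℂ)
    (V : Matrix (Fin n) (Fin r) ℂ) (Vr : Matrix (Fin n) (Fin ρ) ℂ)
    (hM : IsUnit M.det)
    (hMhat : IsUnit (Vᵀ * M * V).det)
    (hMr : IsUnit (Vrᵀ * M * Vr).det)
    -- residual matrix `R := B − M x̂`
    (R : Matrix (Fin n) (Fin nI) ℂ)
    (hR : R = B - M * (V * (Vᵀ * M * V)⁻¹ * (Vᵀ * B)))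
    -- exact residual-system solutions and their Galerkin approximations
    (xr xrhat : Fin nI → Fin n → ℂ)
    (hxr : ∀ j, xr j = M⁻¹.mulVec fun k => R k j)
    (hxrhat : ∀ j, xrhat j = (Vr * (Vrᵀ * M * Vr)⁻¹ * Vrᵀ).mulVec fun k => R k j)
    -- the estimator `Δ̃`, the deviation `δ`, and the true max-entry error
    (Δ δ errMax : ℝ)
    (hΔ : Δ = (Finset.univ : Finset (Fin nO × Fin nI)).sup' Finset.univ_nonempty
        fun p => ‖(C.mulVec (xrhat p.2) p.1)‖)
    (hδ : δ = (Finset.univ : Finset (Fin nO × Fin nI)).sup' Finset.univ_nonempty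
        fun p => ‖(C.mulVec (xr p.2 - xrhat p.2) p.1)‖)
    (herr : errMax = (Finset.univ : Finset (Fin nO × Fin nI)).sup' Finset.univ_nonempty
        fun p =>
          ‖
            (((C * M⁻¹ * B) - (C * V * (Vᵀ * M * V)⁻¹ * (Vᵀ * B))) p.1 p.2)‖) :
    Δ - δ ≤ errMax ∧ errMax ≤ Δ + δ :=
  estimator_two_sided_bound_general M B C V hM R hR xr xrhat hxr Δ δ errMax hΔ hδ herr
end

section
/- Let M ∈ ℂ^{n×n} be invertible, B ∈ ℂ^{n×n_I}, C ∈ ℂ^{n_O×n}, and let V ∈ ℂ^{n×r} be such that M̂ := VᵀMV is invertible. Let x̂_{r_j} ∈ ℂ^n be any approximations of the exact residual-system solutions x_{r_j} := M^{-1} r_j, and set δ_{ij} := |C_i x_{r_j} − C_i x̂_{r_j}|. Then for all indices i, j the entrywise output error of the reduced-order model satisfies |y_{ij} − ŷ_{ij}| ≤ |C_i x̂_{r_j}| + δ_{ij}. -/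
open Matrix

/-!
The residual `R = B - M X` of the reduced solution `X := V M̂⁻¹ VᵀB` satisfies
`M⁻¹ R = M⁻¹ B - X`, so the output `C M⁻¹ r_j` of the exact residual-system solution is the
`j`-th column of the output error `y - ŷ`. The bound is then the triangle inequality
through the approximation `C_i x̂_{r_j}`.
-/

theorem Matrix.mulVec_col_eq {m n o α : Type*} [Fintype n] [NonUnitalNonAssocSemiring α]
    (A : Matrix m n α) (N : Matrix n o α) (j : o) :
    (A *ᵥ fun k => N k j) = fun i => (A * N) i j :=
  rfl

theorem Matrix.nonsing_inv_mul_sub_mul_cancel {n m R : Type*} [Fintype n] [DecidableEq n]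
    [CommRing R] (M : Matrix n n R) (B X : Matrix n m R) (hM : IsUnit M.det) :
    M⁻¹ * (B - M * X) = M⁻¹ * B - X := by
  rw [Matrix.mul_sub, ← Matrix.mul_assoc, M.nonsing_inv_mul hM, Matrix.one_mul]

theorem Matrix.mulVec_nonsing_inv_mulVec_col_sub_mul {n m l R : Type*} [Fintype n]
    [DecidableEq n] [CommRing R] (M : Matrix n n R) (B X : Matrix n m R) (C : Matrix l n R)
    (hM : IsUnit M.det) (j : m) :
    C *ᵥ (M⁻¹ *ᵥ fun k => (B - M * X) k j) = fun i => (C * M⁻¹ * B - C * X) i j := by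
  rw [mulVec_col_eq, mulVec_col_eq, nonsing_inv_mul_sub_mul_cancel M B X hM,
    Matrix.mul_sub, Matrix.mul_assoc]

theorem rom_error_upper_bound_entrywise_general
    {n nI nO r : ℕ}
    (M : Matrix (Fin n) (Fin n) ℂ) (B : Matrix (Fin n) (Fin nI) ℂ)
    (C : Matrix (Fin nO) (Fin n) ℂ) (V : Matrix (Fin n) (Fin r) ℂ)
    (hM : IsUnit M.det)
    (xrhat : Fin nI → Fin n → ℂ) :
    ∀ (i : Fin nO) (j : Fin nI),
      ‖
        (((C * M⁻¹ * B) - (C * V * (Vᵀ * M * V)⁻¹ * (Vᵀ * B))) i j)‖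
      ≤ ‖(C.mulVec (xrhat j) i)‖
        + ‖
            (C.mulVec
              (M⁻¹.mulVec fun k =>
                  (B - M * (V * (Vᵀ * M * V)⁻¹ * (Vᵀ * B))) k j) i
              - C.mulVec (xrhat j) i)‖ := by
  intro i j
  have hŷ : C * V * (Vᵀ * M * V)⁻¹ * (Vᵀ * B)
      = C * (V * (Vᵀ * M * V)⁻¹ * (Vᵀ * B)) := by
    simp only [Matrix.mul_assoc]
  rw [Matrix.mulVec_nonsing_inv_mulVec_col_sub_mul M B _ C hM j, hŷ]
  exact norm_le_norm_add_norm_sub' _ _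

/-- **Upper bound for the entrywise output error.**
For an invertible `M : ℂ^{n×n}`, `B : ℂ^{n×n_I}`, `C : ℂ^{n_O×n}` and a projection matrix
`V : ℂ^{n×r}` with `M̂ := VᵀMV` invertible, let `y := C M⁻¹ B`, `ŷ := C V M̂⁻¹ VᵀB`,
`R := B − M V M̂⁻¹ VᵀB` with columns `r_j`, and `x_{r_j} := M⁻¹ r_j`. If `x̂_{r_j}` are
arbitrary approximations of the `x_{r_j}` and `δ_{ij} := |C_i x_{r_j} − C_i x̂_{r_j}|`,
then `|y_{ij} − ŷ_{ij}| ≤ |C_i x̂_{r_j}| + δ_{ij}` for all `i, j`. -/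
theorem rom_error_upper_bound_entrywise
    {n nI nO r : ℕ}
    (M : Matrix (Fin n) (Fin n) ℂ) (B : Matrix (Fin n) (Fin nI) ℂ)
    (C : Matrix (Fin nO) (Fin n) ℂ) (V : Matrix (Fin n) (Fin r) ℂ)
    (hM : IsUnit M.det) (hMhat : IsUnit (Vᵀ * M * V).det)
    (xrhat : Fin nI → Fin n → ℂ) :
    ∀ (i : Fin nO) (j : Fin nI),
      ‖
        (((C * M⁻¹ * B) - (C * V * (Vᵀ * M * V)⁻¹ * (Vᵀ * B))) i j)‖
      ≤ ‖(C.mulVec (xrhat j) i)‖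
        + ‖
            (C.mulVec
              (M⁻¹.mulVec fun k =>
                  (B - M * (V * (Vᵀ * M * V)⁻¹ * (Vᵀ * B))) k j) i
              - C.mulVec (xrhat j) i)‖ :=
  rom_error_upper_bound_entrywise_general M B C V hM xrhat
end
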